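/- (Trend to equilibrium, planar stationary case.) Let F : [0,∞) → ℝ^N be differentiable and bounded, solving B F′(x) = Q^α(F(x)) for all x > 0 with B = diag(p_1^1,…,p_N^1), and assume there exists η > 0 such that η ≤ F_i(x) ≤ 1/α − η for all i ∈ {1,…,N} and all x ≥ 0. Let ℙ be the set of equilibrium distributions P having the same fluxes as F, i.e., ⟨B1,P⟩ = ⟨B1,F(x)⟩, ⟨Bp^i,P⟩ = ⟨Bp^i,F(x)⟩ for i = 1,…,d, and ⟨B|p|²,P⟩ = ⟨B|p|²,F(x)⟩ (these fluxes of F are independent of x). Then dist(F(x), ℙ) → 0 as x → ∞. If moreover ℙ is finite, then there exists P ∈ ℙ with lim_{x→∞} F(x) = P. -/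

import Mathlib

open Real Finset Filter Set

noncomputable def Psi (α y : ℝ) : ℝ :=
  (1 - α * y) ^ α * (1 + (1 - α) * y) ^ (1 - α)

noncomputable def Qop {N : ℕ} (α : ℝ) (Γ : Fin N → Fin N → Fin N → Fin N → ℝ)
    (F : Fin N → ℝ) : Fin N → ℝ := fun i =>
  ∑ j, ∑ k, ∑ l, Γ i j k l *
    (F k * F l * Psi α (F i) * Psi α (F j) - F i * F j * Psi α (F k) * Psi α (F l))

def dotN {N : ℕ} (u v : Fin N → ℝ) : ℝ := ∑ i, u i * v i

def GammaOK {N d : ℕ} (p : Fin N → Fin d → ℝ)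
    (Γ : Fin N → Fin N → Fin N → Fin N → ℝ) : Prop :=
  (∀ i j k l, 0 ≤ Γ i j k l) ∧
  (∀ i j k l, Γ i j k l = Γ j i k l) ∧
  (∀ i j k l, Γ i j k l = Γ k l i j) ∧
  (∀ i j k l, Γ i j k l ≠ 0 →
    (∀ m, p i m + p j m = p k m + p l m) ∧
    (∑ m, (p i m) ^ 2) + (∑ m, (p j m) ^ 2) = (∑ m, (p k m) ^ 2) + (∑ m, (p l m) ^ 2))

def IsCollInv {N : ℕ} (Γ : Fin N → Fin N → Fin N → Fin N → ℝ) (φ : Fin N → ℝ) : Prop :=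
  ∀ i j k l, Γ i j k l ≠ 0 → φ i + φ j = φ k + φ l

def IsNormal {N d : ℕ} (p : Fin N → Fin d → ℝ)
    (Γ : Fin N → Fin N → Fin N → Fin N → ℝ) : Prop :=
  ∀ φ : Fin N → ℝ, IsCollInv Γ φ →
    ∃ (a c : ℝ) (b : Fin d → ℝ), ∀ i, φ i = a + (∑ m, b m * p i m) + c * ∑ m, (p i m) ^ 2

def IsEquilib {N d : ℕ} (α : ℝ) (p : Fin N → Fin d → ℝ) (P : Fin N → ℝ) : Prop :=
  (∀ i, 0 < P i ∧ P i < 1 / α) ∧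
  ∃ (K : ℝ) (b : Fin d → ℝ) (c : ℝ), 0 < K ∧
    ∀ i, P i / Psi α (P i) = K * Real.exp (-(∑ m, b m * p i m) - c * ∑ m, (p i m) ^ 2)

noncomputable def muF (α y : ℝ) : ℝ :=
  y * Real.log y + (1 - α * y) * Real.log (1 - α * y)
    - (1 + (1 - α) * y) * Real.log (1 + (1 - α) * y)

noncomputable def Rfun {N : ℕ} (α : ℝ) (P : Fin N → ℝ) (i : Fin N) : ℝ :=
  P i * (1 - α * P i) * (1 + (1 - α) * P i)

noncomputable def Pcoef {N : ℕ} (α : ℝ) (P : Fin N → ℝ) (i j k l : Fin N) : ℝ :=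
  P i * P j * Psi α (P k) * Psi α (P l) / Real.sqrt (Rfun α P i)

noncomputable def Lop {N : ℕ} (α : ℝ) (Γ : Fin N → Fin N → Fin N → Fin N → ℝ)
    (P : Fin N → ℝ) (f : Fin N → ℝ) : Fin N → ℝ := fun i =>
  ∑ j, ∑ k, ∑ l, Γ i j k l / Real.sqrt (Rfun α P i) *
    (Pcoef α P i j k l * f i + Pcoef α P j i k l * f j
      - Pcoef α P k l i j * f k - Pcoef α P l k i j * f l)

open scoped NNReal Topology

/-!
Along the flow, `(Bᵢ Fᵢ)' = Qᵢ(F)`. Hence the fluxes `⟨Bθ, F⟩` of the collision invariants `θ` are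
conserved, and the entropy flux `∑ Bᵢ μ(Fᵢ)` (with `μ' = log (y / Ψ y)`) decreases at the rate
`D(F) = -∑ log (Fᵢ / Ψ Fᵢ) Qᵢ(F) ≥ 0` while staying bounded. By the usual symmetrization, `D`
vanishes exactly when `log (F / Ψ F)` is a collision invariant, i.e. (by normality) at equilibria.

Only the coordinates with `Bᵢ ≠ 0` are controlled along the flow (they are Lipschitz); the others
are merely constrained by `Qᵢ(F) = 0`. The key rigidity fact is that a state satisfying these
constraints and agreeing with an equilibrium on the controlled coordinates has `D = 0`. By
compactness, a state at distance `ε` from the zero set of `D` therefore has controlled coordinates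
`δ`-far from those of every such zero; this persists for a fixed time, during which `D` is bounded
below, costing a fixed amount of entropy. So this can happen only finitely often. If there are
finitely many equilibria, the connected curve can only approach one of them.
-/

section Lyapunov

variable {E E' : Type*} [MetricSpace E] [MetricSpace E']

lemma exists_pos_le_dist_map_of_forall_le_dist {V Z : Set E} {ρ : E → E'}
    (hV : IsCompact V) (hZ : IsCompact Z) (hρ : Continuous ρ)
    (hrigid : ∀ G ∈ V, ∀ P ∈ Z, ρ G = ρ P → G ∈ Z) {ε : ℝ} (hε : 0 < ε) :
    ∃ δ > 0, ∀ G ∈ V, (∀ P ∈ Z, ε ≤ dist G P) → ∀ P ∈ Z, δ ≤ dist (ρ G) (ρ P) := by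
  set T := V ×ˢ Z ∩ ⋂ P ∈ Z, {q : E × E | ε ≤ dist q.1 P}
  have hT : IsCompact T := (hV.prod hZ).inter_right <|
    isClosed_biInter fun P _ => isClosed_le continuous_const (continuous_fst.dist continuous_const)
  have hpos : ∀ q ∈ T, 0 < dist (ρ q.1) (ρ q.2) := by
    rintro ⟨G, P⟩ ⟨⟨hG, hP⟩, hfar⟩
    refine dist_pos.2 fun hGP => ?_
    have := mem_iInter₂.1 hfar G (hrigid G hG P hP hGP)
    simp only [mem_ofPred_eq, dist_self] at this
    linarith
  obtain ⟨δ, hδ, hδT⟩ := hT.exists_forall_le'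
    ((hρ.comp continuous_fst).dist (hρ.comp continuous_snd)).continuousOn hpos
  exact ⟨δ, hδ, fun G hG hfar P hP =>
    hδT (G, P) ⟨⟨hG, hP⟩, mem_iInter₂.2 fun P' hP' => hfar P' hP'⟩⟩

lemma exists_pos_le_of_forall_le_dist_map {K Z : Set E} {D : E → ℝ} {ρ : E → E'}
    (hK : IsCompact K) (hD : ContinuousOn D K) (hDZ : ∀ G ∈ K, G ∉ Z → 0 < D G)
    (hρ : Continuous ρ) {δ : ℝ} (hδ : 0 < δ) :
    ∃ c > 0, ∀ G ∈ K, (∀ P ∈ Z, δ ≤ dist (ρ G) (ρ P)) → c ≤ D G := by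
  set Y := K ∩ ⋂ P ∈ Z, {G : E | δ ≤ dist (ρ G) (ρ P)}
  have hY : IsCompact Y := hK.inter_right <|
    isClosed_biInter fun P _ => isClosed_le continuous_const (hρ.dist continuous_const)
  have hpos : ∀ G ∈ Y, 0 < D G := by
    refine fun G ⟨hG, hfar⟩ => hDZ G hG fun hGZ => ?_
    have := mem_iInter₂.1 hfar G hGZ
    simp only [mem_ofPred_eq, dist_self] at this
    linarith
  obtain ⟨c, hc, hcY⟩ := hY.exists_forall_le' (hD.mono inter_subset_left) hpos
  exact ⟨c, hc, fun G hG hfar => hcY G ⟨hG, mem_iInter₂.2 hfar⟩⟩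

lemma le_sub_mul_of_hasDerivAt_le_neg {f f' : ℝ → ℝ} {u v c : ℝ} (huv : u ≤ v)
    (hf : ∀ x ∈ Set.Icc u v, HasDerivAt f (f' x) x) (hf' : ∀ x ∈ Set.Icc u v, f' x ≤ -c) :
    f v ≤ f u - c * (v - u) := by
  have := (convex_Icc u v).image_sub_le_mul_sub_of_deriv_le
    (fun x hx => (hf x hx).continuousAt.continuousWithinAt)
    (fun x hx => (hf x (interior_subset hx)).differentiableAt.differentiableWithinAt)
    (fun x hx => (hf x (interior_subset hx)).deriv ▸ hf' x (interior_subset hx))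
    u (left_mem_Icc.2 huv) v (right_mem_Icc.2 huv) huv
  linarith

lemma exists_forall_sub_lt_of_bddBelow {X : Type*} {f : X → ℝ} {s : Set X} (hs : s.Nonempty)
    (hf : BddBelow (f '' s)) {γ : ℝ} (hγ : 0 < γ) : ∃ x₀ ∈ s, ∀ x ∈ s, f x₀ - γ < f x := by
  obtain ⟨_, ⟨x₀, hx₀, rfl⟩, hlt⟩ := Real.lt_sInf_add_pos (hs.image f) hγ
  exact ⟨x₀, hx₀, fun x hx => by linarith [csInf_le hf (mem_image_of_mem f hx)]⟩

theorem eventually_exists_dist_lt_of_lyapunov {K V : Set E} {D S : E → ℝ} {ρ : E → E'}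
    {F : ℝ → E} {L : ℝ≥0} (hK : IsCompact K) (hV : IsClosed V) (hVK : V ⊆ K)
    (hD : ContinuousOn D K) (hD0 : ∀ G ∈ K, 0 ≤ D G) (hS : ContinuousOn S K)
    (hρ : Continuous ρ) (hrigid : ∀ G ∈ V, ∀ P ∈ K, D P = 0 → ρ G = ρ P → D G = 0)
    (hFV : ∀ x > 0, F x ∈ V) (hSF : ∀ x > 0, HasDerivAt (fun t => S (F t)) (-D (F x)) x)
    (hρF : LipschitzOnWith L (ρ ∘ F) (Ioi 0)) :
    ∀ ε > 0, ∀ᶠ x in atTop, ∃ P ∈ K, D P = 0 ∧ dist (F x) P < ε := by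
  intro ε hε
  set Z := K ∩ D ⁻¹' {0}
  have hZ : IsCompact Z :=
    hK.of_isClosed_subset (hD.preimage_isClosed_of_isClosed hK.isClosed isClosed_singleton)
      inter_subset_left
  obtain ⟨δ, hδ, hδV⟩ := exists_pos_le_dist_map_of_forall_le_dist
    (hK.of_isClosed_subset hV hVK) hZ hρ
    (fun G hG P hP hGP => ⟨hVK hG, hrigid G hG P hP.1 hP.2 hGP⟩) hε
  obtain ⟨c, hc, hcK⟩ := exists_pos_le_of_forall_le_dist_map (Z := Z) hK hD
    (fun G hG hGZ => (hD0 G hG).lt_of_ne fun h => hGZ ⟨hG, h.symm⟩) hρ (half_pos hδ)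
  set τ := δ / (2 * (L + 1))
  have hτ : 0 < τ := by positivity
  have hdecay : ∀ u v c, 0 < u → u ≤ v → (∀ x ∈ Set.Icc u v, c ≤ D (F x)) →
      S (F v) ≤ S (F u) - c * (v - u) := fun u v c hu huv hc =>
    le_sub_mul_of_hasDerivAt_le_neg huv (fun x hx => hSF x (hu.trans_le hx.1))
      fun x hx => neg_le_neg (hc x hx)
  -- Far from `Z`, `ρ ∘ F` is `δ`-far from `ρ '' Z`; being Lipschitz, it stays `δ / 2`-far for a
  -- time `τ`, during which `D ≥ c`.
  have hdrop : ∀ u > 0, (∀ P ∈ Z, ε ≤ dist (F u) P) → S (F (u + τ)) ≤ S (F u) - c * τ := by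
    intro u hu hfar
    have hnear : ∀ x ∈ Set.Icc u (u + τ), dist (ρ (F u)) (ρ (F x)) ≤ δ / 2 := by
      intro x hx
      calc dist (ρ (F u)) (ρ (F x)) ≤ L * dist u x :=
            hρF.dist_le_mul u hu x (hu.trans_le hx.1)
        _ ≤ (L + 1) * τ := by
            gcongr
            · linarith
            · rw [Real.dist_eq, abs_le]; constructor <;> linarith [hx.1, hx.2]
        _ = δ / 2 := by simp only [τ]; field_simp
    have := hdecay u (u + τ) c hu (by linarith) fun x hx => hcK (F x)
      (hVK (hFV x (hu.trans_le hx.1))) fun P hP => by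
        linarith [hδV (F u) (hFV u hu) hfar P hP, hnear x hx,
          dist_triangle (ρ (F u)) (ρ (F x)) (ρ P)]
    simpa using this
  obtain ⟨x₀, hx₀ : 0 < x₀, hx₀min⟩ :=
    exists_forall_sub_lt_of_bddBelow (nonempty_Ioi (a := (0 : ℝ)))
    ((hK.bddBelow_image hS).mono <| by
      rintro _ ⟨x, hx, rfl⟩
      exact mem_image_of_mem S (hVK (hFV x hx))) (mul_pos hc hτ)
  filter_upwards [eventually_ge_atTop x₀] with u hu
  by_contra! hfar
  have := hdrop u (hx₀.trans_le hu) fun P hP => hfar P hP.1 hP.2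
  have := hdecay x₀ u 0 hx₀ hu fun x hx => hD0 _ (hVK (hFV x (hx₀.trans_le hx.1)))
  linarith [hx₀min (u + τ) (show 0 < u + τ by linarith)]

end Lyapunov

section Finite
open Metric
variable {E : Type*} [MetricSpace E]

lemma tendsto_infDist_of_eventually_exists_dist_lt {X : Type*} {l : Filter X} {f : X → E}
    {S : Set E} (h : ∀ ε > 0, ∀ᶠ x in l, ∃ P ∈ S, dist (f x) P < ε) :
    Tendsto (fun x => infDist (f x) S) l (𝓝 0) :=
  Metric.tendsto_nhds.2 fun ε hε => (h ε hε).mono fun x ⟨P, hP, hxP⟩ => by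
    rw [Real.dist_eq, sub_zero, abs_of_nonneg infDist_nonneg]
    exact (infDist_le_dist_of_mem hP).trans_lt hxP

lemma Set.Finite.exists_pos_forall_le_dist {S : Set E} (hS : S.Finite) :
    ∃ r > 0, ∀ P ∈ S, ∀ Q ∈ S, P ≠ Q → r ≤ dist P Q := by
  obtain ⟨r, hr, hrS⟩ :=
    ((hS.prod hS).subset (inter_subset_left (t := {q : E × E | q.1 ≠ q.2}))).isCompact
      |>.exists_forall_le' continuous_dist.continuousOn fun _ hq => dist_pos.2 hq.2
  exact ⟨r, hr, fun P hP Q hQ hPQ => hrS (P, Q) ⟨⟨hP, hQ⟩, hPQ⟩⟩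

theorem exists_tendsto_of_eventually_exists_dist_lt {F : ℝ → E} {S : Set E} {a : ℝ}
    (hF : ContinuousOn F (Ici a)) (hS : S.Finite)
    (hnear : ∀ ε > 0, ∀ᶠ x in atTop, ∃ P ∈ S, dist (F x) P < ε) :
    ∃ P ∈ S, Tendsto F atTop (𝓝 P) := by
  obtain ⟨r, hr, hsep⟩ := hS.exists_pos_forall_le_dist
  obtain ⟨T, hT⟩ := eventually_atTop.1 ((hnear (r / 3) (by positivity)).and (eventually_ge_atTop a))
  obtain ⟨P₀, hP₀, hTP₀⟩ := (hT T le_rfl).1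
  -- Once within `r / 3` of the `r`-separated set `S`, the connected curve cannot switch points.
  have hstay : F '' Ici T ⊆ ball P₀ (r / 3) := by
    refine (isPreconnected_Ici.image F (hF.mono fun x hx => (hT T le_rfl).2.trans hx))
      |>.subset_left_of_subset_union isOpen_ball isClosed_closedBall.isOpen_compl
        (disjoint_compl_right.mono_left ball_subset_closedBall) ?_
        ⟨F T, mem_image_of_mem F self_mem_Ici, hTP₀⟩
    rintro _ ⟨x, hx, rfl⟩
    obtain ⟨P, hP, hxP⟩ := (hT x hx).1
    by_cases hPP₀ : P = P₀
    · exact Or.inl (hPP₀ ▸ hxP)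
    · refine Or.inr fun hx₀ => ?_
      rw [mem_closedBall] at hx₀
      linarith [hsep P hP P₀ hP₀ hPP₀, dist_triangle_left P P₀ (F x)]
  refine ⟨P₀, hP₀, Metric.tendsto_nhds.2 fun ε hε => ?_⟩
  filter_upwards [hnear (min ε (r / 3)) (by positivity), eventually_ge_atTop T]
    with x ⟨P, hP, hxP⟩ hx
  obtain rfl : P = P₀ := by
    by_contra hne
    have := hstay (mem_image_of_mem F hx)
    rw [mem_ball] at this
    linarith [hsep P hP P₀ hP₀ hne, dist_triangle_left P P₀ (F x), min_le_right ε (r / 3)]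
  exact hxP.trans_le (min_le_left _ _)

end Finite

section Symmetrization
variable {ι : Type*} [Fintype ι]

lemma sum_comm_pairs {M : Type*} [AddCommMonoid M] (f : ι → ι → ι → ι → M) :
    ∑ i, ∑ j, ∑ k, ∑ l, f i j k l = ∑ i, ∑ j, ∑ k, ∑ l, f k l i j := by
  simpa only [Fintype.sum_prod_type] using
    Finset.sum_comm (s := univ) (t := univ) (f := fun a b : ι × ι => f a.1 a.2 b.1 b.2)

lemma four_mul_sum_mul_eq_sum {X : ι → ι → ι → ι → ℝ} (θ : ι → ℝ)
    (hswap : ∀ i j k l, X j i k l = X i j k l) (hpair : ∀ i j k l, X k l i j = -X i j k l) :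
    4 * ∑ i, ∑ j, ∑ k, ∑ l, θ i * X i j k l
      = ∑ i, ∑ j, ∑ k, ∑ l, (θ i + θ j - θ k - θ l) * X i j k l := by
  have hswap' : ∀ i j k l, X i j l k = X i j k l := fun i j k l => by
    rw [← neg_neg (X i j l k), ← hpair, hswap, hpair, neg_neg]
  have hj : ∑ i, ∑ j, ∑ k, ∑ l, θ j * X i j k l = ∑ i, ∑ j, ∑ k, ∑ l, θ i * X i j k l := by
    rw [Finset.sum_comm]
    congr! 4 with j i k l
    rw [hswap]
  have hk : ∑ i, ∑ j, ∑ k, ∑ l, θ k * X i j k l = -∑ i, ∑ j, ∑ k, ∑ l, θ i * X i j k l := by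
    rw [sum_comm_pairs]
    simp only [← Finset.sum_neg_distrib, ← mul_neg]
    congr! 5 with i j k l
    rw [hpair]
  have hl : ∑ i, ∑ j, ∑ k, ∑ l, θ l * X i j k l = ∑ i, ∑ j, ∑ k, ∑ l, θ k * X i j k l := by
    refine Finset.sum_congr rfl fun i _ => Finset.sum_congr rfl fun j _ => ?_
    rw [Finset.sum_comm]
    congr! 2 with l k
    rw [hswap']
  simp only [sub_mul, add_mul, Finset.sum_add_distrib, Finset.sum_sub_distrib, hj, hk, hl]
  ring

lemma sum4_eq_zero_iff_of_nonpos {t : ι → ι → ι → ι → ℝ}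
    (ht : ∀ i j k l, t i j k l ≤ 0) :
    ∑ i, ∑ j, ∑ k, ∑ l, t i j k l = 0 ↔ ∀ i j k l, t i j k l = 0 := by
  have h3 : ∀ i j k, ∑ l, t i j k l ≤ 0 := fun i j k => Finset.sum_nonpos fun l _ => ht i j k l
  have h2 : ∀ i j, ∑ k, ∑ l, t i j k l ≤ 0 := fun i j => Finset.sum_nonpos fun k _ => h3 i j k
  have h1 : ∀ i, ∑ j, ∑ k, ∑ l, t i j k l ≤ 0 := fun i => Finset.sum_nonpos fun j _ => h2 i j
  refine ⟨fun h i j k l => ?_, fun h => by simp [h]⟩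
  have h := (Finset.sum_eq_zero_iff_of_nonpos fun i _ => h1 i).1 h i (mem_univ i)
  have h := (Finset.sum_eq_zero_iff_of_nonpos fun j _ => h2 i j).1 h j (mem_univ j)
  have h := (Finset.sum_eq_zero_iff_of_nonpos fun k _ => h3 i j k).1 h k (mem_univ k)
  exact (Finset.sum_eq_zero_iff_of_nonpos fun l _ => ht i j k l).1 h l (mem_univ l)

end Symmetrization

lemma log_sub_log_mul_sub_nonpos {a b : ℝ} (ha : 0 < a) (hb : 0 < b) :
    (Real.log b - Real.log a) * (a - b) ≤ 0 := by
  rcases le_total a b with h | h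
  · nlinarith [Real.log_le_log ha h]
  · nlinarith [Real.log_le_log hb h]

section Collision
variable {N : ℕ} {α : ℝ} {Γ : Fin N → Fin N → Fin N → Fin N → ℝ}

noncomputable def collTerm (α : ℝ) (G : Fin N → ℝ) (i j k l : Fin N) : ℝ :=
  G k * G l * Psi α (G i) * Psi α (G j) - G i * G j * Psi α (G k) * Psi α (G l)

lemma four_mul_sum_mul_Qop (hs1 : ∀ i j k l, Γ i j k l = Γ j i k l)
    (hs2 : ∀ i j k l, Γ i j k l = Γ k l i j) (θ G : Fin N → ℝ) :
    4 * ∑ i, θ i * Qop α Γ G i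
      = ∑ i, ∑ j, ∑ k, ∑ l, (θ i + θ j - θ k - θ l) * (Γ i j k l * collTerm α G i j k l) := by
  rw [← four_mul_sum_mul_eq_sum θ (fun i j k l => by rw [hs1 j i k l]; unfold collTerm; ring)
    fun i j k l => by rw [hs2 k l i j]; unfold collTerm; ring]
  simp only [Qop, collTerm, Finset.mul_sum]

lemma sum_mul_Qop_eq_zero (hs1 : ∀ i j k l, Γ i j k l = Γ j i k l)
    (hs2 : ∀ i j k l, Γ i j k l = Γ k l i j) {θ : Fin N → ℝ} (hθ : IsCollInv Γ θ)
    (G : Fin N → ℝ) : ∑ i, θ i * Qop α Γ G i = 0 := by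
  have h := four_mul_sum_mul_Qop (α := α) hs1 hs2 θ G
  rw [Finset.sum_eq_zero fun i _ => Finset.sum_eq_zero fun j _ => Finset.sum_eq_zero
    fun k _ => Finset.sum_eq_zero fun l _ => ?_] at h
  · linarith
  · by_cases hΓ : Γ i j k l = 0
    · simp [hΓ]
    · simp [show θ i + θ j - θ k - θ l = 0 by linarith [hθ i j k l hΓ]]

noncomputable def logOdds (α y : ℝ) : ℝ := Real.log y - Real.log (Psi α y)

noncomputable def entropyDissipation (α : ℝ) (Γ : Fin N → Fin N → Fin N → Fin N → ℝ)
    (G : Fin N → ℝ) : ℝ :=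
  -∑ i, logOdds α (G i) * Qop α Γ G i

variable {G : Fin N → ℝ}

lemma logOdds_combination_eq (hG : ∀ i, 0 < G i ∧ 0 < Psi α (G i)) (i j k l : Fin N) :
    logOdds α (G i) + logOdds α (G j) - logOdds α (G k) - logOdds α (G l)
      = Real.log (G i * G j * Psi α (G k) * Psi α (G l))
        - Real.log (G k * G l * Psi α (G i) * Psi α (G j)) := by
  obtain ⟨⟨hi, hΨi⟩, ⟨hj, hΨj⟩, ⟨hk, hΨk⟩, ⟨hl, hΨl⟩⟩ :
      _ ∧ _ ∧ _ ∧ _ := ⟨hG i, hG j, hG k, hG l⟩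
  simp only [logOdds]
  rw [Real.log_mul (by positivity) (by positivity), Real.log_mul (by positivity) (by positivity),
    Real.log_mul (by positivity) (by positivity), Real.log_mul (by positivity) (by positivity),
    Real.log_mul (by positivity) (by positivity), Real.log_mul (by positivity) (by positivity)]
  ring

lemma mul_logOdds_combination_mul_collTerm_nonpos (hΓ0 : ∀ i j k l, 0 ≤ Γ i j k l)
    (hG : ∀ i, 0 < G i ∧ 0 < Psi α (G i)) (i j k l : Fin N) :
    Γ i j k l * ((logOdds α (G i) + logOdds α (G j) - logOdds α (G k) - logOdds α (G l))
      * collTerm α G i j k l) ≤ 0 := by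
  obtain ⟨⟨hi, hΨi⟩, ⟨hj, hΨj⟩, ⟨hk, hΨk⟩, ⟨hl, hΨl⟩⟩ :
      _ ∧ _ ∧ _ ∧ _ := ⟨hG i, hG j, hG k, hG l⟩
  rw [logOdds_combination_eq hG]
  exact mul_nonpos_of_nonneg_of_nonpos (hΓ0 i j k l)
    (log_sub_log_mul_sub_nonpos (by positivity) (by positivity))

lemma four_mul_entropyDissipation (hs1 : ∀ i j k l, Γ i j k l = Γ j i k l)
    (hs2 : ∀ i j k l, Γ i j k l = Γ k l i j) (G : Fin N → ℝ) :
    4 * entropyDissipation α Γ G = -∑ i, ∑ j, ∑ k, ∑ l, Γ i j k l *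
      ((logOdds α (G i) + logOdds α (G j) - logOdds α (G k) - logOdds α (G l))
        * collTerm α G i j k l) := by
  rw [entropyDissipation, mul_neg, four_mul_sum_mul_Qop hs1 hs2]
  simp only [mul_left_comm _ (Γ _ _ _ _)]

lemma entropyDissipation_nonneg (hΓ0 : ∀ i j k l, 0 ≤ Γ i j k l)
    (hs1 : ∀ i j k l, Γ i j k l = Γ j i k l) (hs2 : ∀ i j k l, Γ i j k l = Γ k l i j)
    (hG : ∀ i, 0 < G i ∧ 0 < Psi α (G i)) : 0 ≤ entropyDissipation α Γ G := by
  have := four_mul_entropyDissipation (α := α) hs1 hs2 G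
  have := Finset.sum_nonpos (s := univ) fun i _ => Finset.sum_nonpos (s := univ) fun j _ =>
    Finset.sum_nonpos (s := univ) fun k _ => Finset.sum_nonpos (s := univ) fun l _ =>
      mul_logOdds_combination_mul_collTerm_nonpos hΓ0 hG i j k l
  linarith

lemma isCollInv_of_entropyDissipation_eq_zero (hΓ0 : ∀ i j k l, 0 ≤ Γ i j k l)
    (hs1 : ∀ i j k l, Γ i j k l = Γ j i k l) (hs2 : ∀ i j k l, Γ i j k l = Γ k l i j)
    (hG : ∀ i, 0 < G i ∧ 0 < Psi α (G i)) (hD : entropyDissipation α Γ G = 0) :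
    IsCollInv Γ fun i => logOdds α (G i) := by
  have h4 := four_mul_entropyDissipation (α := α) hs1 hs2 G
  rw [hD, mul_zero, zero_eq_neg,
    sum4_eq_zero_iff_of_nonpos (mul_logOdds_combination_mul_collTerm_nonpos hΓ0 hG)] at h4
  intro i j k l hΓ
  show logOdds α (G i) + logOdds α (G j) = logOdds α (G k) + logOdds α (G l)
  have hcomb := logOdds_combination_eq hG i j k l
  rcases mul_eq_zero.1 ((mul_eq_zero.1 (h4 i j k l)).resolve_left hΓ) with h | h
  · linarith
  · rw [collTerm, sub_eq_zero] at h
    rw [h, sub_self] at hcomb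
    linarith

lemma entropyDissipation_eq_zero_of_mul_eq (hs1 : ∀ i j k l, Γ i j k l = Γ j i k l)
    (hs2 : ∀ i j k l, Γ i j k l = Γ k l i j) {B P : Fin N → ℝ}
    (hP : IsCollInv Γ fun i => logOdds α (P i)) (hG : ∀ i, B i = 0 → Qop α Γ G i = 0)
    (hGP : ∀ i, B i * G i = B i * P i) : entropyDissipation α Γ G = 0 := by
  have hsub : ∑ i, (logOdds α (G i) - logOdds α (P i)) * Qop α Γ G i = 0 := by
    refine Finset.sum_eq_zero fun i _ => ?_
    by_cases hB : B i = 0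
    · rw [hG i hB, mul_zero]
    · rw [mul_left_cancel₀ hB (hGP i), sub_self, zero_mul]
  rw [entropyDissipation, neg_eq_zero]
  simpa only [sub_mul, Finset.sum_sub_distrib, sum_mul_Qop_eq_zero hs1 hs2 hP G, sub_zero]
    using hsub

end Collision

section Equilibria
variable {N d : ℕ} {α : ℝ} {Γ : Fin N → Fin N → Fin N → Fin N → ℝ} {p : Fin N → Fin d → ℝ}

lemma factors_pos_of_mem_Ioo {y : ℝ} (hα0 : 0 < α) (hy : y ∈ Ioo 0 (1 / α)) :
    0 < 1 - α * y ∧ 0 < 1 + (1 - α) * y := by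
  have : α * y < 1 := by rw [← lt_div_iff₀' hα0]; exact hy.2
  constructor <;> nlinarith [hy.1]

lemma Psi_pos {y : ℝ} (h1 : 0 < 1 - α * y) (h2 : 0 < 1 + (1 - α) * y) : 0 < Psi α y :=
  mul_pos (Real.rpow_pos_of_pos h1 _) (Real.rpow_pos_of_pos h2 _)

lemma pos_and_Psi_pos_of_mem_Ioo {y : ℝ} (hα0 : 0 < α) (hy : y ∈ Ioo 0 (1 / α)) :
    0 < y ∧ 0 < Psi α y :=
  ⟨hy.1, Psi_pos (factors_pos_of_mem_Ioo hα0 hy).1 (factors_pos_of_mem_Ioo hα0 hy).2⟩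

lemma isEquilib_of_isCollInv (hα0 : 0 < α) (hnorm : IsNormal p Γ)
    {G : Fin N → ℝ} (hG : ∀ i, G i ∈ Ioo 0 (1 / α)) (hc : IsCollInv Γ fun i => logOdds α (G i)) :
    IsEquilib α p G := by
  obtain ⟨a, c, b, hrep⟩ := hnorm _ hc
  refine ⟨hG, Real.exp a, fun m => -b m, -c, Real.exp_pos a, fun i => ?_⟩
  obtain ⟨hGi, hΨ⟩ := pos_and_Psi_pos_of_mem_Ioo hα0 (hG i)
  rw [← Real.exp_log (div_pos hGi hΨ), Real.log_div hGi.ne' hΨ.ne', ← Real.exp_add]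
  congr 1
  simp only [logOdds] at hrep
  simp only [hrep i, neg_mul, Finset.sum_neg_distrib]
  ring

lemma hasDerivAt_muF {y : ℝ} (h1 : 0 < y) (h2 : 0 < 1 - α * y) (h3 : 0 < 1 + (1 - α) * y) :
    HasDerivAt (muF α) (logOdds α y) y := by
  have hu : HasDerivAt (fun y : ℝ => 1 - α * y) (-α) y := by
    simpa using ((hasDerivAt_id y).const_mul α).const_sub 1
  have hv : HasDerivAt (fun y : ℝ => 1 + (1 - α) * y) (1 - α) y := by
    simpa using ((hasDerivAt_id y).const_mul (1 - α)).const_add 1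
  have hlog : logOdds α y = Real.log y + 1 + (Real.log (1 - α * y) + 1) * -α
      - (Real.log (1 + (1 - α) * y) + 1) * (1 - α) := by
    rw [logOdds, Psi, Real.log_mul (Real.rpow_pos_of_pos h2 _).ne' (Real.rpow_pos_of_pos h3 _).ne',
      Real.log_rpow h2, Real.log_rpow h3]
    ring
  rw [hlog]
  exact ((Real.hasDerivAt_mul_log h1.ne').add ((Real.hasDerivAt_mul_log h2.ne').comp y hu)).sub
    ((Real.hasDerivAt_mul_log h3.ne').comp y hv)

lemma continuous_muF : Continuous (muF α) :=
  (Real.continuous_mul_log.add (Real.continuous_mul_log.comp (by fun_prop))).sub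
    (Real.continuous_mul_log.comp (by fun_prop))

lemma continuous_Psi (hα0 : 0 ≤ α) (hα1 : α ≤ 1) : Continuous (Psi α) :=
  ((continuous_const.sub (continuous_const.mul continuous_id)).rpow_const fun _ => Or.inr hα0).mul
    ((continuous_const.add (continuous_const.mul continuous_id)).rpow_const
      fun _ => Or.inr (sub_nonneg.2 hα1))

lemma continuous_Qop (hα0 : 0 ≤ α) (hα1 : α ≤ 1) : Continuous (Qop (N := N) α Γ) := by
  have := continuous_Psi hα0 hα1
  unfold Qop
  fun_prop

lemma continuousOn_entropyDissipation (hα0 : 0 ≤ α) (hα1 : α ≤ 1) :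
    ContinuousOn (entropyDissipation α Γ) {G | ∀ i, 0 < G i ∧ 0 < Psi α (G i)} := by
  have hΨ := continuous_Psi hα0 hα1
  refine (continuousOn_finsetSum _ fun i _ => ContinuousOn.mul ?_
    ((continuous_apply i).comp (continuous_Qop hα0 hα1)).continuousOn).neg
  exact ((continuous_apply i).continuousOn.log fun G hG => (hG i).1.ne').sub
    ((hΨ.comp (continuous_apply i)).continuousOn.log fun G hG => (hG i).2.ne')

end Equilibria

def SameFluxes {N d : ℕ} (p : Fin N → Fin d → ℝ) (B G G₀ : Fin N → ℝ) : Prop :=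
  dotN (fun i => B i * 1) G = dotN (fun i => B i * 1) G₀ ∧
    (∀ m, dotN (fun i => B i * p i m) G = dotN (fun i => B i * p i m) G₀) ∧
    dotN (fun i => B i * ∑ m, p i m ^ 2) G = dotN (fun i => B i * ∑ m, p i m ^ 2) G₀

noncomputable def entropyFlux {N : ℕ} (α : ℝ) (B G : Fin N → ℝ) : ℝ :=
  ∑ i, B i * muF α (G i)

section Trajectory
variable {N d : ℕ} {α : ℝ} {Γ : Fin N → Fin N → Fin N → Fin N → ℝ} {p : Fin N → Fin d → ℝ}
  {B : Fin N → ℝ} {F F' : ℝ → EuclideanSpace ℝ (Fin N)}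

lemma continuous_entropyFlux : Continuous (entropyFlux (N := N) α B) :=
  continuous_finsetSum _ fun i _ => continuous_const.mul (continuous_muF.comp (continuous_apply i))

lemma continuous_dotN (u : Fin N → ℝ) :
    Continuous fun G : EuclideanSpace ℝ (Fin N) => dotN u G :=
  continuous_finsetSum _ fun i _ => continuous_const.mul (PiLp.continuous_apply 2 _ i)

lemma isClosed_setOf_sameFluxes (G₀ : Fin N → ℝ) :
    IsClosed {G : EuclideanSpace ℝ (Fin N) | SameFluxes p B G G₀} := by
  simp only [SameFluxes, ofPred_and, ofPred_forall]
  exact (isClosed_eq (continuous_dotN _) continuous_const).inter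
    ((isClosed_iInter fun m => isClosed_eq (continuous_dotN _) continuous_const).inter
      (isClosed_eq (continuous_dotN _) continuous_const))

lemma isCompact_setOf_forall_mem_Icc (a b : ℝ) :
    IsCompact {G : EuclideanSpace ℝ (Fin N) | ∀ i, a ≤ G i ∧ G i ≤ b} := by
  convert (PiLp.homeomorph 2 _).isCompact_preimage.2
    (isCompact_univ_pi fun (_ : Fin N) => isCompact_Icc (a := a) (b := b)) using 1
  ext G
  simp only [Set.mem_preimage, Set.mem_univ_pi, Set.mem_Icc, Set.mem_ofPred_eq]
  rfl

lemma hasDerivAt_apply_of_hasDerivWithinAt_Ici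
    (hdiff : ∀ x ∈ Ici (0 : ℝ), HasDerivWithinAt F (F' x) (Ici 0) x) {x : ℝ} (hx : 0 < x)
    (i : Fin N) : HasDerivAt (fun t => F t i) (F' x i) x :=
  ((EuclideanSpace.proj (𝕜 := ℝ) i).hasFDerivAt.comp_hasDerivWithinAt x (hdiff x hx.le)).hasDerivAt
    (Ici_mem_nhds hx)

lemma isClosed_setOf_Qop_eq_zero (hα0 : 0 ≤ α) (hα1 : α ≤ 1) :
    IsClosed {G : EuclideanSpace ℝ (Fin N) | ∀ i, B i = 0 → Qop α Γ G i = 0} := by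
  simp only [ofPred_forall]
  exact isClosed_iInter fun i => isClosed_iInter fun _ => isClosed_eq
    ((continuous_apply i).comp ((continuous_Qop hα0 hα1).comp (PiLp.continuous_ofLp 2 _)))
    continuous_const

variable (hdiff : ∀ x ∈ Ici (0 : ℝ), HasDerivWithinAt F (F' x) (Ici 0) x)
  (heq : ∀ x ∈ Ioi (0 : ℝ), ∀ i, B i * F' x i = Qop α Γ (F x) i)
include hdiff heq

lemma dotN_trajectory_eq (hs1 : ∀ i j k l, Γ i j k l = Γ j i k l)
    (hs2 : ∀ i j k l, Γ i j k l = Γ k l i j) {θ : Fin N → ℝ} (hθ : IsCollInv Γ θ) {x : ℝ}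
    (hx : 0 ≤ x) : dotN (fun i => B i * θ i) (F x) = dotN (fun i => B i * θ i) (F 0) := by
  rcases hx.eq_or_lt with rfl | hx
  · rfl
  have hcont : ContinuousOn (fun t => dotN (fun i => B i * θ i) (F t)) (Icc 0 x) :=
    ((continuous_dotN _).comp_continuousOn fun t ht => (hdiff t ht).continuousWithinAt).mono
      Icc_subset_Ici_self
  obtain ⟨ξ, hξ, hslope⟩ := exists_hasDerivAt_eq_slope _ _ hx hcont fun t ht =>
    HasDerivAt.fun_sum fun i _ =>
      (hasDerivAt_apply_of_hasDerivWithinAt_Ici hdiff ht.1 i).const_mul _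
  have hzero : ∑ i, B i * θ i * F' ξ i = 0 := by
    rw [← sum_mul_Qop_eq_zero (α := α) hs1 hs2 hθ (F ξ)]
    exact Finset.sum_congr rfl fun i _ => by rw [← heq ξ hξ.1 i]; ring
  rw [hzero, eq_comm, div_eq_zero_iff, sub_eq_zero, sub_zero] at hslope
  exact hslope.resolve_right hx.ne'

lemma sameFluxes_trajectory (hs1 : ∀ i j k l, Γ i j k l = Γ j i k l)
    (hs2 : ∀ i j k l, Γ i j k l = Γ k l i j)
    (hcons : ∀ i j k l, Γ i j k l ≠ 0 → (∀ m, p i m + p j m = p k m + p l m) ∧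
      ∑ m, p i m ^ 2 + ∑ m, p j m ^ 2 = ∑ m, p k m ^ 2 + ∑ m, p l m ^ 2)
    {x : ℝ} (hx : 0 ≤ x) : SameFluxes p B (F x) (F 0) :=
  ⟨dotN_trajectory_eq hdiff heq hs1 hs2 (fun _ _ _ _ _ => rfl) hx,
    fun m => dotN_trajectory_eq hdiff heq hs1 hs2 (fun i j k l h => (hcons i j k l h).1 m) hx,
    dotN_trajectory_eq hdiff heq hs1 hs2 (fun i j k l h => (hcons i j k l h).2) hx⟩

lemma hasDerivAt_entropyFlux (hα0 : 0 < α) {x : ℝ} (hx : 0 < x)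
    (hFx : ∀ i, F x i ∈ Ioo 0 (1 / α)) :
    HasDerivAt (fun t => entropyFlux α B (F t)) (-entropyDissipation α Γ (F x)) x := by
  rw [entropyDissipation, neg_neg]
  refine HasDerivAt.fun_sum fun i _ => ?_
  obtain ⟨h2, h3⟩ := factors_pos_of_mem_Ioo hα0 (hFx i)
  have h := ((hasDerivAt_muF (hFx i).1 h2 h3).comp x
    (hasDerivAt_apply_of_hasDerivWithinAt_Ici hdiff hx i)).const_mul (B i)
  rwa [mul_left_comm, heq x hx i] at h

lemma lipschitzOnWith_mul_trajectory (hα0 : 0 ≤ α) (hα1 : α ≤ 1)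
    {K : Set (EuclideanSpace ℝ (Fin N))} (hK : IsCompact K) (hFK : ∀ x > 0, F x ∈ K) :
    ∃ L, LipschitzOnWith L (fun x i => B i * F x i) (Ioi 0) := by
  obtain ⟨C, hC⟩ := hK.exists_bound_of_continuousOn
    ((continuous_Qop (Γ := Γ) hα0 hα1).comp (PiLp.continuous_ofLp 2 _)).continuousOn
  refine ⟨C.toNNReal, (convex_Ioi 0).lipschitzOnWith_of_nnnorm_hasDerivWithin_le
    (f' := fun x => Qop α Γ (F x))
    (fun x hx => (hasDerivAt_pi.2 fun i => ?_).hasDerivWithinAt) fun x hx => ?_⟩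
  · rw [← heq x hx i]
    exact (hasDerivAt_apply_of_hasDerivWithinAt_Ici hdiff hx i).const_mul (B i)
  · rw [← NNReal.coe_le_coe, coe_nnnorm]
    exact (hC _ (hFK x hx)).trans (Real.le_coe_toNNReal C)

theorem eventually_exists_isEquilib_dist_lt {η : ℝ} (hα0 : 0 < α) (hα1 : α ≤ 1) (hη : 0 < η)
    (hΓ : GammaOK p Γ) (hnorm : IsNormal p Γ)
    (hbound : ∀ x ∈ Ici (0 : ℝ), ∀ i, η ≤ F x i ∧ F x i ≤ 1 / α - η) :
    ∀ ε > 0, ∀ᶠ x in atTop, ∃ P : EuclideanSpace ℝ (Fin N),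
      (IsEquilib α p P ∧ SameFluxes p B P (F 0)) ∧ dist (F x) P < ε := by
  obtain ⟨hΓ0, hs1, hs2, hcons⟩ := hΓ
  set K := {G : EuclideanSpace ℝ (Fin N) | ∀ i, η ≤ G i ∧ G i ≤ 1 / α - η} ∩
    {G | SameFluxes p B G (F 0)}
  have hK : IsCompact K :=
    (isCompact_setOf_forall_mem_Icc _ _).inter_right (isClosed_setOf_sameFluxes _)
  have hKIoo : ∀ G ∈ K, ∀ i, G i ∈ Ioo 0 (1 / α) := fun G hG i =>
    ⟨hη.trans_le (hG.1 i).1, (hG.1 i).2.trans_lt (sub_lt_self _ hη)⟩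
  have hKpos : ∀ G ∈ K, ∀ i, 0 < G i ∧ 0 < Psi α (G i) := fun G hG i =>
    pos_and_Psi_pos_of_mem_Ioo hα0 (hKIoo G hG i)
  have hFK : ∀ x > 0, F x ∈ K := fun x hx =>
    ⟨hbound x hx.le, sameFluxes_trajectory hdiff heq hs1 hs2 hcons hx.le⟩
  obtain ⟨L, hL⟩ := lipschitzOnWith_mul_trajectory hdiff heq hα0.le hα1 hK hFK
  intro ε hε
  filter_upwards [eventually_exists_dist_lt_of_lyapunov
    (V := K ∩ {G | ∀ i, B i = 0 → Qop α Γ G i = 0}) (D := fun G => entropyDissipation α Γ G)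
    (S := fun G => entropyFlux α B G) (ρ := fun G i => B i * G i)
    hK (hK.isClosed.inter (isClosed_setOf_Qop_eq_zero hα0.le hα1)) inter_subset_left
    ((continuousOn_entropyDissipation hα0.le hα1).comp (PiLp.continuous_ofLp 2 _).continuousOn
      hKpos)
    (fun G hG => entropyDissipation_nonneg hΓ0 hs1 hs2 (hKpos G hG))
    (continuous_entropyFlux.comp (PiLp.continuous_ofLp 2 _)).continuousOn
    (continuous_pi fun i => continuous_const.mul (PiLp.continuous_apply 2 _ i))
    (fun G hG P hPK hDP hGP => entropyDissipation_eq_zero_of_mul_eq hs1 hs2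
      (isCollInv_of_entropyDissipation_eq_zero hΓ0 hs1 hs2 (hKpos P hPK) hDP) hG.2
      (congrFun hGP))
    (fun x hx => ⟨hFK x hx, fun i hB => by rw [← heq x hx i, hB, zero_mul]⟩)
    (fun x hx => hasDerivAt_entropyFlux hdiff heq hα0 hx (hKIoo _ (hFK x hx))) hL ε hε]
    with x ⟨P, hPK, hDP, hxP⟩
  exact ⟨P, ⟨isEquilib_of_isCollInv hα0 hnorm (hKIoo P hPK)
    (isCollInv_of_entropyDissipation_eq_zero hΓ0 hs1 hs2 (hKpos P hPK) hDP), hPK.2⟩, hxP⟩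

end Trajectory

theorem stmt11_general {N d : ℕ} (hd : 0 < d)
    (α : ℝ) (hα0 : 0 < α) (hα1 : α < 1)
    (p : Fin N → Fin d → ℝ) (Γ : Fin N → Fin N → Fin N → Fin N → ℝ)
    (hΓ : GammaOK p Γ) (hnorm : IsNormal p Γ)
    (F F' : ℝ → EuclideanSpace ℝ (Fin N))
    (hdiff : ∀ x ∈ Set.Ici (0 : ℝ), HasDerivWithinAt F (F' x) (Set.Ici 0) x)
    (heq : ∀ x ∈ Set.Ioi (0 : ℝ), ∀ i, p i ⟨0, hd⟩ * F' x i = Qop α Γ (F x) i)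
    (η : ℝ) (hη : 0 < η)
    (hbound : ∀ x ∈ Set.Ici (0 : ℝ), ∀ i, η ≤ F x i ∧ F x i ≤ 1 / α - η)
    (Pset : Set (EuclideanSpace ℝ (Fin N)))
    (hPset : Pset = {P : EuclideanSpace ℝ (Fin N) | IsEquilib α p P ∧
      dotN (fun i => p i ⟨0, hd⟩ * 1) P = dotN (fun i => p i ⟨0, hd⟩ * 1) (F 0) ∧
      (∀ m : Fin d, dotN (fun i => p i ⟨0, hd⟩ * p i m) P
        = dotN (fun i => p i ⟨0, hd⟩ * p i m) (F 0)) ∧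
      dotN (fun i => p i ⟨0, hd⟩ * ∑ m, (p i m) ^ 2) P
        = dotN (fun i => p i ⟨0, hd⟩ * ∑ m, (p i m) ^ 2) (F 0)}) :
    Filter.Tendsto (fun x => Metric.infDist (F x) Pset) Filter.atTop (nhds 0) ∧
    (Pset.Finite → ∃ P ∈ Pset, Filter.Tendsto F Filter.atTop (nhds P)) := by
  have hnear : ∀ ε > 0, ∀ᶠ x in atTop, ∃ P ∈ Pset, dist (F x) P < ε := by
    subst hPset
    exact eventually_exists_isEquilib_dist_lt hdiff heq hα0 hα1.le hη hΓ hnorm hbound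
  exact ⟨tendsto_infDist_of_eventually_exists_dist_lt hnear, fun hfin =>
    exists_tendsto_of_eventually_exists_dist_lt (fun x hx => (hdiff x hx).continuousWithinAt)
      hfin hnear⟩

/-- trend to equilibrium for the planar stationary system (Theorem 7). -/
theorem stmt11 {N d : ℕ} (hN : 0 < N) (hd : 0 < d)
    (α : ℝ) (hα0 : 0 < α) (hα1 : α < 1)
    (p : Fin N → Fin d → ℝ) (Γ : Fin N → Fin N → Fin N → Fin N → ℝ)
    (hΓ : GammaOK p Γ) (hnorm : IsNormal p Γ)
    (F F' : ℝ → EuclideanSpace ℝ (Fin N))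
    (hdiff : ∀ x ∈ Set.Ici (0 : ℝ), HasDerivWithinAt F (F' x) (Set.Ici 0) x)
    (hbdd : ∃ C : ℝ, ∀ x ∈ Set.Ici (0 : ℝ), ‖F x‖ ≤ C)
    (heq : ∀ x ∈ Set.Ioi (0 : ℝ), ∀ i, p i ⟨0, hd⟩ * F' x i = Qop α Γ (F x) i)
    (η : ℝ) (hη : 0 < η)
    (hbound : ∀ x ∈ Set.Ici (0 : ℝ), ∀ i, η ≤ F x i ∧ F x i ≤ 1 / α - η)
    (Pset : Set (EuclideanSpace ℝ (Fin N)))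
    (hPset : Pset = {P : EuclideanSpace ℝ (Fin N) | IsEquilib α p P ∧
      dotN (fun i => p i ⟨0, hd⟩ * 1) P = dotN (fun i => p i ⟨0, hd⟩ * 1) (F 0) ∧
      (∀ m : Fin d, dotN (fun i => p i ⟨0, hd⟩ * p i m) P
        = dotN (fun i => p i ⟨0, hd⟩ * p i m) (F 0)) ∧
      dotN (fun i => p i ⟨0, hd⟩ * ∑ m, (p i m) ^ 2) P
        = dotN (fun i => p i ⟨0, hd⟩ * ∑ m, (p i m) ^ 2) (F 0)}) :
    Filter.Tendsto (fun x => Metric.infDist (F x) Pset) Filter.atTop (nhds 0) ∧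
    (Pset.Finite → ∃ P ∈ Pset, Filter.Tendsto F Filter.atTop (nhds P)) :=
  stmt11_general hd α hα0 hα1 p Γ hΓ hnorm F F' hdiff heq η hη hbound Pset hPset
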